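/- arXiv:2509.23116 — 2 statements merged into one kernel-verified Lean document; each statement's English description precedes it below -/
import Mathlib

section
/- Let v(z) = 1/z + 1/(1-z) for z in (0,1). Then for the generator L applied to v, namely L v(x) = ηα(-1/x² + 1/(1-x)²)(1-x) + x(-1/x² + 1/(1-x)²)(η²β(1-x) - (γ+ρ)) + σ²x²(1-x)²(1/x³ + 1/(1-x)³), one has L v(x) ≤ (max{ηα + η²β, γ+ρ} + σ²)·v(x) for all x in (0,1). -/
/-- Lyapunov bound for the generator applied to v(z) = 1/z + 1/(1-z). -/
theorem generator_lyapunov_bound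
    (α β γ σ η ρ : ℝ) (hα : 0 < α) (hβ : 0 < β) (hγ : 0 < γ) (hσ : 0 < σ)
    (hη : η ∈ Set.Icc (0 : ℝ) 1) (hρ : 0 ≤ ρ)
    (v : ℝ → ℝ) (hv : ∀ z, v z = 1 / z + 1 / (1 - z))
    (Lv : ℝ → ℝ)
    (hLv : ∀ x, Lv x =
      η * α * (-(1 / x ^ 2) + 1 / (1 - x) ^ 2) * (1 - x)
      + x * (-(1 / x ^ 2) + 1 / (1 - x) ^ 2) * (η ^ 2 * β * (1 - x) - (γ + ρ))
      + σ ^ 2 * x ^ 2 * (1 - x) ^ 2 * (1 / x ^ 3 + 1 / (1 - x) ^ 3))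
    (x : ℝ) (hx : x ∈ Set.Ioo (0 : ℝ) 1) :
    Lv x ≤ (max (η * α + η ^ 2 * β) (γ + ρ) + σ ^ 2) * v x := by
  obtain ⟨hx0, hx1⟩ := hx
  have hu : 0 < 1 - x := by linarith
  set M := max (η * α + η ^ 2 * β) (γ + ρ) with hMdef
  have hM1 : η * α + η ^ 2 * β ≤ M := le_max_left _ _
  have hM2 : γ + ρ ≤ M := le_max_right _ _
  have hηα : 0 ≤ η * α := mul_nonneg hη.1 hα.le
  have hηβ : 0 ≤ η ^ 2 * β := mul_nonneg (sq_nonneg η) hβ.le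
  have hγρ : 0 ≤ γ + ρ := by linarith
  have hxne : x ≠ 0 := hx0.ne'
  have hune : (1 - x) ≠ 0 := hu.ne'
  have hA : (x - (1 - x)) * (η * α * (1 - x) + η ^ 2 * β * x * (1 - x) - (γ + ρ) * x)
      ≤ M * (x * (1 - x)) := by
    rcases le_total (1 - x) x with h | h
    · nlinarith [mul_nonneg (sub_nonneg.2 hM1) (mul_pos hx0 hu).le,
        mul_nonneg (mul_nonneg (sub_nonneg.2 h) hγρ) hx0.le,
        mul_nonneg hηα (sq_nonneg (1 - x)),
        mul_nonneg (mul_nonneg hηβ hx0.le) (sq_nonneg (1 - x))]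
    · nlinarith [mul_nonneg (sub_nonneg.2 hM2) (mul_pos hx0 hu).le,
        mul_nonneg hγρ (sq_nonneg x),
        mul_nonneg (mul_nonneg (sub_nonneg.2 h) hηα) hu.le,
        mul_nonneg (mul_nonneg (sub_nonneg.2 h) hηβ) (mul_pos hx0 hu).le]
  have hB : σ ^ 2 * (x ^ 3 + (1 - x) ^ 3) ≤ σ ^ 2 := by
    nlinarith [sq_nonneg σ, mul_pos hx0 hu, sq_nonneg x, sq_nonneg (1 - x),
      mul_nonneg (sq_nonneg σ) (mul_pos (mul_pos hx0 hu) (mul_pos hx0 hu)).le,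
      mul_nonneg (sq_nonneg σ) (mul_pos hx0 hu).le]
  have hden : 0 < x ^ 3 * (1 - x) ^ 3 := by positivity
  have e1 : Lv x * (x ^ 3 * (1 - x) ^ 3)
      = (x - (1 - x)) * (η * α * (1 - x) + η ^ 2 * β * x * (1 - x) - (γ + ρ) * x)
          * (x * (1 - x))
        + σ ^ 2 * (x ^ 3 + (1 - x) ^ 3) * (x ^ 2 * (1 - x) ^ 2) := by
    rw [hLv]
    field_simp
    ring
  have e2 : ((M + σ ^ 2) * v x) * (x ^ 3 * (1 - x) ^ 3)
      = (M + σ ^ 2) * (x ^ 2 * (1 - x) ^ 2) := by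
    rw [hv]
    field_simp
    ring
  have key : Lv x * (x ^ 3 * (1 - x) ^ 3) ≤ ((M + σ ^ 2) * v x) * (x ^ 3 * (1 - x) ^ 3) := by
    rw [e1, e2]
    have h1 := mul_le_mul_of_nonneg_right hA (mul_pos hx0 hu).le
    have h2 := mul_le_mul_of_nonneg_right hB (by positivity : (0:ℝ) ≤ x ^ 2 * (1 - x) ^ 2)
    nlinarith [h1, h2]
  exact le_of_mul_le_mul_right key hden
end

section
/- Let h(x) = a·x for a > 0 and define a_n = 2/(2 + a²·n·(n+1)) for n ∈ ℕ with a₀ = 1. Then (a_n) is strictly decreasing, converges to 0, and for every n ≥ 1 the integral of 1/h(u)² over [a_n, a_{n-1}] equals n. -/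
/-!
The reciprocals `1 / aₙ = 1 + a²n(n+1)/2` grow by exactly `a²n` from `aₙ₋₁` to `aₙ`, and
`1 / (a u)²` has antiderivative `-1 / (a² u)`, so the integral over `[aₙ, aₙ₋₁]` is
`(1 / aₙ - 1 / aₙ₋₁) / a² = n`. The same increments give monotonicity and the limit.
-/

open Filter Set
open scoped Interval

theorem integral_one_div_mul_sq (a : ℝ) {x y : ℝ} (h : (0 : ℝ) ∉ [[x, y]]) :
    ∫ u in x..y, 1 / (a * u) ^ 2 = (x⁻¹ - y⁻¹) / a ^ 2 := by
  have hzpow : ∫ u in x..y, u ^ (-2 : ℤ) = x⁻¹ - y⁻¹ := by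
    rw [integral_zpow (Or.inr ⟨by norm_num, h⟩)]
    norm_num
    ring
  calc ∫ u in x..y, 1 / (a * u) ^ 2 = ∫ u in x..y, (a ^ 2)⁻¹ * u ^ (-2 : ℤ) := by
        congr 1; ext u; simp [mul_pow, zpow_neg, mul_comm]
    _ = (x⁻¹ - y⁻¹) / a ^ 2 := by
        rw [intervalIntegral.integral_const_mul, hzpow, inv_mul_eq_div]

noncomputable def partitionSeq (a : ℝ) (n : ℕ) : ℝ := 2 / (2 + a ^ 2 * n * (n + 1))

namespace partitionSeq

variable (a : ℝ)

theorem zero : partitionSeq a 0 = 1 := by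
  norm_num [partitionSeq]

theorem pos (n : ℕ) : 0 < partitionSeq a n := by
  unfold partitionSeq; positivity

theorem inv_eq (n : ℕ) : (partitionSeq a n)⁻¹ = 1 + a ^ 2 * n * (n + 1) / 2 := by
  rw [partitionSeq, inv_div]; ring

theorem inv_succ_sub_inv (n : ℕ) :
    (partitionSeq a (n + 1))⁻¹ - (partitionSeq a n)⁻¹ = a ^ 2 * (n + 1) := by
  rw [inv_eq, inv_eq]; push_cast; ring

variable {a}

theorem strictAnti (ha : a ≠ 0) : StrictAnti (partitionSeq a) := by
  refine strictAnti_nat_of_succ_lt fun n => ?_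
  rw [← inv_lt_inv₀ (pos a n) (pos a (n + 1)), ← sub_pos, inv_succ_sub_inv]
  positivity

theorem tendsto_zero (ha : a ≠ 0) : Tendsto (partitionSeq a) atTop (nhds 0) := by
  have hinv : Tendsto (fun n => (partitionSeq a n)⁻¹) atTop atTop := by
    simp only [inv_eq]
    refine tendsto_atTop_add_const_left _ _ (Tendsto.atTop_div_const (by positivity) ?_)
    simp only [mul_assoc]
    exact (tendsto_natCast_atTop_atTop.atTop_mul_atTop₀
      (tendsto_natCast_atTop_atTop.atTop_add tendsto_const_nhds)).const_mul_atTop (by positivity)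
  simpa only [Pi.inv_def, inv_inv] using hinv.inv_tendsto_atTop

theorem integral_one_div_mul_sq_succ (ha : a ≠ 0) (n : ℕ) :
    ∫ u in partitionSeq a (n + 1)..partitionSeq a n, 1 / (a * u) ^ 2 = (n : ℝ) + 1 := by
  rw [_root_.integral_one_div_mul_sq a (notMem_uIcc_of_lt (pos a _) (pos a _)),
    inv_succ_sub_inv]
  field_simp

end partitionSeq

/-- The sequence aₙ = 2/(2 + a²n(n+1)) is strictly decreasing to 0, a₀ = 1, and the
integral of 1/h(u)² with h(u) = a·u over [aₙ, aₙ₋₁] equals n. -/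
theorem sequence_integral_partition
    (a : ℝ) (ha : 0 < a)
    (A : ℕ → ℝ) (hA : ∀ n, A n = 2 / (2 + a ^ 2 * n * (n + 1))) :
    A 0 = 1 ∧ StrictAnti A ∧ Filter.Tendsto A Filter.atTop (nhds 0) ∧
    ∀ n : ℕ, 1 ≤ n → (∫ u in A n..A (n - 1), 1 / (a * u) ^ 2) = (n : ℝ) := by
  obtain rfl : A = partitionSeq a := funext hA
  refine ⟨partitionSeq.zero a, partitionSeq.strictAnti ha.ne', partitionSeq.tendsto_zero ha.ne',
    fun n hn => ?_⟩
  obtain ⟨k, rfl⟩ := Nat.exists_eq_add_of_le' hn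
  simpa using partitionSeq.integral_one_div_mul_sq_succ ha.ne' k
end
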